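/- arXiv:2005.11419 — 6 statements merged into one kernel-verified Lean document; each statement's English description precedes it below -/
import Mathlib

section
/- Let f : A → B be a surjective homomorphism of Noetherian commutative rings with identity, and let x₁,…,x_p ∈ A be elements such that f(x₁),…,f(x_p) are not zero-divisors in B. Let S be the multiplicative set generated by x₁,…,x_p. If the localized homomorphism S⁻¹A → S⁻¹B is an isomorphism, and for each i the induced homomorphism A/(xᵢ) → B/(f(xᵢ)) is an isomorphism, then f is an isomorphism. -/
/-!
Let `K = ker f`. If `a ∈ K`, then `a` dies in `B/(f xᵢ)`, so by injectivity of `A/(xᵢ) → B/(f xᵢ)`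
we get `a = c xᵢ`, and `f c = 0` because `f xᵢ` is a nonzerodivisor; hence `K = xᵢ K`. As `K` is
finitely generated, Nakayama's lemma gives `r ∈ (xᵢ)` acting as the identity on `K`, so `xᵢ`, and
therefore every element of `S`, is a nonzerodivisor on `K`. Finally an element of `K` vanishes in
`S⁻¹A` by injectivity of `S⁻¹A → S⁻¹B`, i.e. is killed by some `s ∈ S`, hence is zero.
-/

open nonZeroDivisors nonZeroSMulDivisors

theorem Submodule.mem_nonZeroSMulDivisors_of_le_span_smul {R M : Type*} [CommRing R]
    [AddCommGroup M] [Module R M] {N : Submodule R M} (hN : N.FG) {r : R}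
    (h : N ≤ Ideal.span {r} • N) : r ∈ R⁰[N] := by
  obtain ⟨t, ht, ht_smul⟩ := exists_mem_and_smul_eq_self_of_fg_of_le_smul _ N hN h
  obtain ⟨c, rfl⟩ := Ideal.mem_span_singleton'.mp ht
  intro m hm
  calc m = (c * r) • m := Subtype.ext (ht_smul m m.2).symm
    _ = c • r • m := mul_smul c r m
    _ = 0 := by rw [hm, smul_zero]

theorem RingHom.ker_le_span_smul_ker {A B : Type*} [CommRing A] [CommRing B] (f : A →+* B)
    {a : A} (ha : f a ∈ B⁰)
    (hinj : Function.Injective (Ideal.quotientMap (Ideal.span {f a}) f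
      ((Ideal.span_singleton_le_iff_mem _).mpr (Ideal.mem_span_singleton_self (f a))))) :
    RingHom.ker f ≤ Ideal.span {a} • RingHom.ker f := by
  intro b hb
  have hb_quot : Ideal.Quotient.mk (Ideal.span {a}) b = 0 :=
    hinj (by rw [Ideal.quotientMap_mk, RingHom.mem_ker.mp hb, map_zero, map_zero])
  obtain ⟨c, rfl⟩ := Ideal.mem_span_singleton'.mp (Ideal.Quotient.eq_zero_iff_mem.mp hb_quot)
  have hc : f c = 0 :=
    (mul_right_mem_nonZeroDivisors_eq_zero_iff ha).mp (by rw [← map_mul]; exact hb)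
  rw [mul_comm]
  exact Submodule.smul_mem_smul (Ideal.mem_span_singleton_self a) hc

theorem RingHom.injective_of_isLocalization_map_injective {A B Aₛ Bₜ : Type*} [CommRing A]
    [CommRing B] [CommRing Aₛ] [CommRing Bₜ] [Algebra A Aₛ] [Algebra B Bₜ] (f : A →+* B)
    {S : Submonoid A} {T : Submonoid B} [IsLocalization S Aₛ] [IsLocalization T Bₜ]
    (hle : S ≤ T.comap f)
    (hloc : Function.Injective (IsLocalization.map Bₜ f hle : Aₛ →+* Bₜ))
    (hS : S ≤ A⁰[RingHom.ker f]) : Function.Injective f := by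
  rw [injective_iff_map_eq_zero]
  intro a ha
  have ha_loc : algebraMap A Aₛ a = 0 :=
    hloc (by rw [IsLocalization.map_eq, ha, map_zero, map_zero])
  obtain ⟨s, hs⟩ := (IsLocalization.map_eq_zero_iff S Aₛ a).mp ha_loc
  exact congrArg Subtype.val (hS s.2 ⟨a, ha⟩ (Subtype.ext hs))

/-- **Lemma A.1.** Let `f : A → B` be a surjective homomorphism of Noetherian commutative
rings, `x 1, …, x p ∈ A` elements whose images are nonzerodivisors in `B`, and `S` the
multiplicative set generated by the `x i`. If the localized map `S⁻¹A → S⁻¹B` is an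
isomorphism and each induced map `A/(x i) → B/(f (x i))` is an isomorphism, then `f` is an
isomorphism. -/
theorem cluster_config_ring_iso
    {A B : Type*} [CommRing A] [CommRing B]
    [IsNoetherianRing A]
    (f : A →+* B) (hf : Function.Surjective f)
    {p : ℕ} (x : Fin p → A)
    (hx : ∀ i, f (x i) ∈ nonZeroDivisors B)
    (S : Submonoid A) (hS : S = Submonoid.closure (Set.range x))
    (T : Submonoid B)
    (hle : S ≤ T.comap f)
    (hloc : Function.Bijective
      (IsLocalization.map (Localization T) f hle : Localization S →+* Localization T))
    (hquot : ∀ i, Function.Bijective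
      (Ideal.quotientMap (Ideal.span {f (x i)}) f
        (by
          rw [Ideal.span_le, Set.singleton_subset_iff]
          exact Ideal.subset_span (Set.mem_singleton _)))) :
    Function.Bijective f := by
  refine ⟨f.injective_of_isLocalization_map_injective hle hloc.injective ?_, hf⟩
  rw [hS, Submonoid.closure_le]
  rintro _ ⟨i, rfl⟩
  exact Submodule.mem_nonZeroSMulDivisors_of_le_span_smul (IsNoetherian.noetherian _)
    (f.ker_le_span_smul_ker (hx i) (hquot i).injective)
end

section
/- Let k be a field and n ≥ 4. For a configuration of n distinct points z₁,…,z_n in k, set u_{ij} = ((z_i - z_{j+1})(z_{i+1} - z_j))/((z_i - z_j)(z_{i+1} - z_{j+1})) for each diagonal (i,j) of the n-gon (indices mod n, with 2 ≤ j - i ≤ n-2). Then for each diagonal (i,j), u_{ij} + ∏_{(k,ℓ) crossing (i,j)} u_{kℓ} = 1, where the product ranges over diagonals (k,ℓ) that cross (i,j) in the interior of the polygon. -/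
/-!
The crossing diagonals `(k, ℓ)` of `(i, j)` are, after replacing each `(k, ℓ)` with `ℓ < i` by
`(ℓ, k + n)`, exactly the lattice points of the rectangle `i < k < j < ℓ < i + n`. Each `u k ℓ`
is a multiplicative mixed second difference of `g a b = z a - z b` in the two indices, so the
product over the rectangle telescopes to the single cross-ratio
`(z (i+1) - z i) (z j - z (j+1)) / ((z (i+1) - z (j+1)) (z j - z i))`, which is `1 - u i j`.
-/

open Finset

theorem Function.Periodic.apply_ne_of_lt_of_lt_add {α : Type*} {z : ℕ → α} {n : ℕ}
    (hper : Function.Periodic z n) (hinj : Set.InjOn z (Set.Iio n)) {a b : ℕ}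
    (hab : a < b) (hba : b < a + n) : z a ≠ z b := by
  intro h
  rw [← hper.map_mod_nat a, ← hper.map_mod_nat b] at h
  have hmod : a % n = b % n :=
    hinj (Set.mem_Iio.mpr (Nat.mod_lt _ (by omega))) (Set.mem_Iio.mpr (Nat.mod_lt _ (by omega))) h
  have := Nat.le_of_dvd (by omega) ((Nat.modEq_iff_dvd' hab.le).mp hmod)
  omega

theorem Finset.prod_Ico_div_of_ne_zero {G₀ : Type*} [CommGroupWithZero G₀] (f : ℕ → G₀)
    {a b : ℕ} (hab : a ≤ b) (hf : ∀ l ∈ Icc a b, f l ≠ 0) :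
    ∏ l ∈ Ico a b, f (l + 1) / f l = f b / f a := by
  induction b, hab using Nat.le_induction with
  | base => simp [hf a (by simp)]
  | succ b hab ih =>
    rw [prod_Ico_succ_top hab, ih fun l hl => hf l (Icc_subset_Icc_right b.le_succ hl), mul_comm,
      div_mul_div_cancel₀ (hf b (mem_Icc.mpr ⟨hab, b.le_succ⟩))]

theorem Finset.prod_Ico_prod_Ico_cross_ratio {G₀ : Type*} [CommGroupWithZero G₀]
    (g : ℕ → ℕ → G₀) {a b c d : ℕ} (hab : a ≤ b) (hcd : c ≤ d)
    (hg : ∀ k ∈ Icc a b, ∀ l ∈ Icc c d, g k l ≠ 0) :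
    ∏ k ∈ Ico a b, ∏ l ∈ Ico c d, g k (l + 1) * g (k + 1) l / (g k l * g (k + 1) (l + 1)) =
      g a d * g b c / (g a c * g b d) := by
  have hinner : ∀ k ∈ Ico a b,
      ∏ l ∈ Ico c d, g k (l + 1) * g (k + 1) l / (g k l * g (k + 1) (l + 1)) =
        g (k + 1) c / g (k + 1) d / (g k c / g k d) := by
    intro k hk
    simp only [mem_Ico] at hk
    calc ∏ l ∈ Ico c d, g k (l + 1) * g (k + 1) l / (g k l * g (k + 1) (l + 1))
        = ∏ l ∈ Ico c d, g k (l + 1) / g (k + 1) (l + 1) / (g k l / g (k + 1) l) := by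
          refine prod_congr rfl fun l _ => ?_
          rw [div_div_div_eq, mul_comm (g k l)]
      _ = g k d / g (k + 1) d / (g k c / g (k + 1) c) :=
          prod_Ico_div_of_ne_zero (fun l => g k l / g (k + 1) l) hcd fun l hl =>
            div_ne_zero (hg k (mem_Icc.mpr ⟨hk.1, hk.2.le⟩) l hl)
              (hg (k + 1) (mem_Icc.mpr ⟨by omega, hk.2⟩) l hl)
      _ = g (k + 1) c / g (k + 1) d / (g k c / g k d) := by
          rw [div_div_div_eq, div_div_div_eq, mul_comm (g k d)]
  rw [prod_congr rfl hinner,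
    prod_Ico_div_of_ne_zero (fun k => g k c / g k d) hab fun k hk =>
      div_ne_zero (hg k hk c (left_mem_Icc.mpr hcd)) (hg k hk d (right_mem_Icc.mpr hcd)),
    div_div_div_eq, mul_comm (g b c), mul_comm (g b d)]

theorem cross_ratio_add_cross_ratio_eq_one {K : Type*} [Field K] {a b c d : K} (hac : a ≠ c)
    (hbd : b ≠ d) :
    (a - d) * (b - c) / ((a - c) * (b - d)) + (b - a) * (c - d) / ((b - d) * (c - a)) = 1 := by
  have hac' : a - c ≠ 0 := sub_ne_zero.mpr hac
  have hca : c - a ≠ 0 := sub_ne_zero.mpr hac.symm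
  have hbd' : b - d ≠ 0 := sub_ne_zero.mpr hbd
  field_simp
  ring

theorem prod_crossing_diagonals_eq_prod_rectangle {M : Type*} [CommMonoid M] {n i j : ℕ}
    (f : ℕ → ℕ → M) (hf : ∀ k l, f l (k + n) = f k l) (hij : i < j) (hjn : j < n) :
    ∏ p ∈ (range n ×ˢ range n).filter
        (fun p =>
          (p.1 < p.2 ∧ p.2 < n ∧ 2 ≤ p.2 - p.1 ∧ p.2 - p.1 ≤ n - 2) ∧
            ((i < p.1 ∧ p.1 < j ∧ j < p.2) ∨ (p.1 < i ∧ i < p.2 ∧ p.2 < j))),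
        f p.1 p.2 =
      ∏ p ∈ Ioo i j ×ˢ Ioo j (i + n), f p.1 p.2 := by
  refine prod_nbij' (fun p => if i < p.1 then p else (p.2, p.1 + n))
    (fun p => if p.2 < n then p else (p.2 - n, p.1)) ?_ ?_ ?_ ?_ ?_
  all_goals
    intro p hp
    simp only [mem_filter, mem_product, mem_range, mem_Ioo] at hp
  · split_ifs <;> simp only [mem_product, mem_Ioo] <;> omega
  · split_ifs <;> simp only [mem_filter, mem_product, mem_range] <;> omega
  · split_ifs <;> ext <;> dsimp only at * <;> omega
  · split_ifs <;> ext <;> dsimp only at * <;> omega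
  · split_ifs
    · rfl
    · exact (hf p.1 p.2).symm

theorem dihedral_u_equations_general {K : Type*} [Field K] (n : ℕ)
    (z : ℕ → K) (hper : ∀ i, z (i + n) = z i)
    (hdist : ∀ a b, a < n → b < n → z a = z b → a = b)
    (u : ℕ → ℕ → K)
    (hu : ∀ i j, u i j =
      ((z i - z (j + 1)) * (z (i + 1) - z j)) /
        ((z i - z j) * (z (i + 1) - z (j + 1))))
    (i j : ℕ) (hij : i < j ∧ j < n ∧ 2 ≤ j - i ∧ j - i ≤ n - 2) :
    u i j +
      ∏ p ∈ (range n ×ˢ range n).filter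
        (fun p =>
          (p.1 < p.2 ∧ p.2 < n ∧ 2 ≤ p.2 - p.1 ∧ p.2 - p.1 ≤ n - 2) ∧
            ((i < p.1 ∧ p.1 < j ∧ j < p.2) ∨ (p.1 < i ∧ i < p.2 ∧ p.2 < j))),
        u p.1 p.2 = 1 := by
  obtain ⟨hij, hjn, -, -⟩ := hij
  have hne {a b : ℕ} (hab : a < b) (hba : b < a + n) : z a ≠ z b :=
    Function.Periodic.apply_ne_of_lt_of_lt_add hper (fun a ha b hb => hdist a b ha hb) hab hba
  have hsymm (k l : ℕ) : u l (k + n) = u k l := by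
    rw [hu, hu, add_right_comm, hper, hper]
    ring
  have hrect := prod_Ico_prod_Ico_cross_ratio (fun a b => z a - z b) (a := i + 1) (b := j)
    (c := j + 1) (d := i + n) (by omega) (by omega) fun k hk l hl => by
      simp only [mem_Icc] at hk hl
      exact sub_ne_zero.mpr (hne (by omega) (by omega))
  simp only [← hu] at hrect
  rw [prod_crossing_diagonals_eq_prod_rectangle u hsymm hij hjn, prod_product,
    ← Ico_add_one_left_eq_Ioo, ← Ico_add_one_left_eq_Ioo, hrect, hper, hu]
  exact cross_ratio_add_cross_ratio_eq_one (hne hij (by omega)) (hne (by omega) (by omega))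

/-- **Dihedral coordinates satisfy the u-equations.** Let `z 0, …, z (n-1)` be `n ≥ 4`
distinct points of a field `K` (extended `n`-periodically), and for a diagonal `(i,j)` of
the `n`-gon (i.e. `i < j < n`, `2 ≤ j - i ≤ n - 2`) set
`u i j = ((z i - z (j+1)) (z (i+1) - z j)) / ((z i - z j) (z (i+1) - z (j+1)))`.
Then `u i j + ∏ u k ℓ = 1`, the product running over all diagonals `(k,ℓ)` crossing
`(i,j)` in the interior of the polygon. -/
theorem dihedral_u_equations {K : Type*} [Field K] (n : ℕ) (hn : 4 ≤ n)
    (z : ℕ → K) (hper : ∀ i, z (i + n) = z i)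
    (hdist : ∀ a b, a < n → b < n → z a = z b → a = b)
    (u : ℕ → ℕ → K)
    (hu : ∀ i j, u i j =
      ((z i - z (j + 1)) * (z (i + 1) - z j)) /
        ((z i - z j) * (z (i + 1) - z (j + 1))))
    (i j : ℕ) (hij : i < j ∧ j < n ∧ 2 ≤ j - i ∧ j - i ≤ n - 2) :
    u i j +
      ∏ p ∈ (range n ×ˢ range n).filter
        (fun p =>
          (p.1 < p.2 ∧ p.2 < n ∧ 2 ≤ p.2 - p.1 ∧ p.2 - p.1 ≤ n - 2) ∧
            ((i < p.1 ∧ p.1 < j ∧ j < p.2) ∨ (p.1 < i ∧ i < p.2 ∧ p.2 < j))),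
        u p.1 p.2 = 1 :=
  dihedral_u_equations_general n z hper hdist u hu i j hij
end

section
/- Let q be a prime power with odd characteristic. The number of orbits of the involution z ↦ (1/z₁,…,1/z_n) acting on the set Z̊_n(𝔽̄_q)^{Frobenius-twisted fixed points}, computed as the set of points of M_{C_n} over 𝔽_q, equals (q - n - 1)(q-3)(q-5)⋯(q-2n+1). Concretely: ½[ #{(z₁,…,z_n) ∈ 𝔽_q^n : zᵢ≠±z_j (i≠j), zᵢ∉{0,±1}} + #{(z₁,…,z_n) ∈ 𝔽_{q²}^n : zᵢ^{q+1}=1, zᵢ^q ≠ ±z_j^q for i≠j applied as zᵢ≠±z_j, zᵢ∉{0,±1}} ] = (q-n-1)(q-3)(q-5)⋯(q-2n+1). -/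
/-!
If `S` is a finite set on which `x ↦ -x` acts without fixed points, the tuples in `Sⁿ` with
`zᵢ ≠ ±zⱼ` number `∏_{k<n} (#S - 2k)`: once `z₀` is chosen, the rest is such a tuple in
`S \ {±z₀}`. Over `𝔽_q` the entries range over `S = 𝔽_q \ {0, ±1}`, with `q - 3` elements.
Over `E = 𝔽_{q²}`, whose unit group is cyclic of order `(q - 1)(q + 1)`, they range over the
`q + 1` roots of unity of order dividing `q + 1` except `±1`, so `#S = q - 1`. The two products
share the factors `(q - 3)⋯(q - 2n + 1)`, and the remaining factors `q - 2n - 1` and `q - 1`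
add up to `2(q - n - 1)`.
-/

open Finset Polynomial

def SignedInjective {ι α : Type*} [Neg α] (z : ι → α) : Prop :=
  ∀ i j, i ≠ j → z i ≠ z j ∧ z i ≠ -z j

instance finite_signedInjective_mem {ι α : Type*} [Neg α] [Finite ι] (S : Finset α) :
    Finite {z : ι → α // SignedInjective z ∧ ∀ i, z i ∈ S} :=
  Finite.of_injective (fun z i => (⟨z.1 i, z.2.2 i⟩ : S))
    fun _ _ h => Subtype.ext (funext fun i => congrArg Subtype.val (congrFun h i))

section InvolutiveNeg

variable {α : Type*} [InvolutiveNeg α]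

theorem signedInjective_cons_iff {n : ℕ} {a : α} {w : Fin n → α} :
    SignedInjective (Fin.cons a w : Fin (n + 1) → α) ↔
      SignedInjective w ∧ ∀ i, w i ≠ a ∧ w i ≠ -a := by
  constructor
  · intro h
    refine ⟨fun i j hij => by simpa using h i.succ j.succ (by simpa using hij),
      fun i => by simpa using h i.succ 0 (Fin.succ_ne_zero i)⟩
  · rintro ⟨hw, ha⟩ i j hij
    cases i using Fin.cases <;> cases j using Fin.cases
    · exact absurd rfl hij
    · simp only [Fin.cons_zero, Fin.cons_succ]
      exact ⟨(ha _).1.symm, fun h => (ha _).2 (by rw [h, neg_neg])⟩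
    · simpa using ha _
    · simpa using hw _ _ (by simpa using hij)

variable [DecidableEq α]

def Finset.eraseSigned (S : Finset α) (a : α) : Finset α := (S.erase a).erase (-a)

@[simp]
theorem Finset.mem_eraseSigned {S : Finset α} {a x : α} :
    x ∈ S.eraseSigned a ↔ x ≠ -a ∧ x ≠ a ∧ x ∈ S := by
  simp [Finset.eraseSigned]

theorem Finset.neg_mem_eraseSigned {S : Finset α} (hS : ∀ x ∈ S, -x ∈ S) {a x : α}
    (hx : x ∈ S.eraseSigned a) : -x ∈ S.eraseSigned a := by
  simp only [mem_eraseSigned, ne_eq, neg_inj] at hx ⊢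
  exact ⟨hx.2.1, fun h => hx.1 (by rw [← h, neg_neg]), hS x hx.2.2⟩

theorem Finset.card_eraseSigned {S : Finset α} (hS : ∀ x ∈ S, -x ∈ S) {a : α} (ha : a ∈ S)
    (hfree : -a ≠ a) : #(S.eraseSigned a) = #S - 2 := by
  rw [eraseSigned, card_erase_of_mem (mem_erase.mpr ⟨hfree, hS a ha⟩), card_erase_of_mem ha]
  rfl

theorem signedInjective_cons_and_mem_iff {n : ℕ} {S : Finset α} {a : α} {w : Fin n → α} :
    (SignedInjective (Fin.cons a w : Fin (n + 1) → α) ∧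
        ∀ i, (Fin.cons a w : Fin (n + 1) → α) i ∈ S) ↔
      a ∈ S ∧ SignedInjective w ∧ ∀ i, w i ∈ S.eraseSigned a := by
  simp only [signedInjective_cons_iff, Fin.forall_fin_succ, Fin.cons_zero, Fin.cons_succ,
    mem_eraseSigned]
  grind

def signedInjectiveConsEquiv (S : Finset α) (n : ℕ) :
    {z : Fin (n + 1) → α // SignedInjective z ∧ ∀ i, z i ∈ S} ≃
      Σ a : S, {w : Fin n → α // SignedInjective w ∧ ∀ i, w i ∈ S.eraseSigned a} where
  toFun z :=
    have h := signedInjective_cons_and_mem_iff.mp (Fin.cons_self_tail z.1 ▸ z.2)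
    ⟨⟨z.1 0, h.1⟩, Fin.tail z.1, h.2⟩
  invFun p := ⟨Fin.cons p.1 p.2.1, signedInjective_cons_and_mem_iff.mpr ⟨p.1.2, p.2.2⟩⟩
  left_inv z := Subtype.ext (Fin.cons_self_tail z.1)
  right_inv _ := rfl

theorem card_signedInjective_fin (n : ℕ) {S : Finset α} (hS : ∀ x ∈ S, -x ∈ S)
    (hfree : ∀ x ∈ S, -x ≠ x) :
    Nat.card {z : Fin n → α // SignedInjective z ∧ ∀ i, z i ∈ S} =
      ∏ k ∈ range n, (#S - 2 * k) := by
  induction n generalizing S with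
  | zero =>
    rw [prod_range_zero, Nat.card_eq_one_iff_exists]
    exact ⟨⟨Fin.elim0, fun i => i.elim0, fun i => i.elim0⟩,
      fun z => Subtype.ext (funext fun i => i.elim0)⟩
  | succ n ih =>
    have hfiber (a : S) :
        Nat.card {w : Fin n → α // SignedInjective w ∧ ∀ i, w i ∈ S.eraseSigned a} =
          ∏ k ∈ range n, (#S - 2 * (k + 1)) := by
      rw [ih (fun x => S.neg_mem_eraseSigned hS)
        (fun x hx => hfree x (mem_eraseSigned.mp hx).2.2), card_eraseSigned hS a.2 (hfree a a.2)]
      exact prod_congr rfl fun k _ => by omega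
    rw [Nat.card_congr (signedInjectiveConsEquiv S n), Nat.card_sigma]
    simp only [hfiber, sum_const, card_univ, Fintype.card_coe, smul_eq_mul, prod_range_succ',
      mul_zero, Nat.sub_zero]
    ring

end InvolutiveNeg

theorem card_signedInjective_eraseSigned_one {R : Type*} [Ring R] [IsDomain R] [DecidableEq R]
    (hR : ringChar R ≠ 2) (n : ℕ) {T : Finset R} (hT : ∀ x ∈ T, -x ∈ T) (h0 : (0 : R) ∉ T)
    (h1 : (1 : R) ∈ T) :
    Nat.card {z : Fin n → R // SignedInjective z ∧ ∀ i, z i ∈ T.eraseSigned 1} =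
      ∏ k ∈ range n, (#T - 2 - 2 * k) := by
  have hfree : ∀ x ∈ T, -x ≠ x := fun x hx h =>
    h0 ((Ring.eq_self_iff_eq_zero_of_char_ne_two hR).mp h ▸ hx)
  rw [card_signedInjective_fin n (fun _ => T.neg_mem_eraseSigned hT)
    (fun x hx => hfree x (mem_eraseSigned.mp hx).2.2), card_eraseSigned hT h1 (hfree 1 h1)]

theorem FiniteField.card_nthRootsFinset_one_of_dvd {K : Type*} [Field K] [Fintype K] {k : ℕ}
    (hk : k ∣ Fintype.card K - 1) : #(nthRootsFinset k (1 : K)) = k := by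
  have : NeZero k := ⟨by
    rintro rfl
    have := Fintype.one_lt_card (α := K)
    rw [zero_dvd_iff] at hk
    omega⟩
  have hroots : Nat.card (rootsOfUnity k K) = k := by
    rw [rootsOfUnity_eq_ker, IsCyclic.card_powMonoidHom_ker, Nat.card_units,
      Nat.card_eq_fintype_card, Nat.gcd_eq_right hk]
  obtain ⟨ζ, hζ⟩ := card_rootsOfUnity_eq_iff_exists_isPrimitiveRoot.mp hroots
  exact hζ.card_nthRootsFinset

theorem card_signedInjective_ne_zero_one_neg_one {F : Type*} [Field F] [Fintype F]
    (hF : ringChar F ≠ 2) (n : ℕ) :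
    Nat.card {z : Fin n → F // SignedInjective z ∧ ∀ i, z i ≠ 0 ∧ z i ≠ 1 ∧ z i ≠ -1} =
      ∏ k ∈ range n, (Fintype.card F - (2 * k + 3)) := by
  classical
  have hcongr (z : Fin n → F) : (SignedInjective z ∧ ∀ i, z i ≠ 0 ∧ z i ≠ 1 ∧ z i ≠ -1) ↔
      SignedInjective z ∧ ∀ i, z i ∈ (univ.erase 0).eraseSigned 1 := by
    simp only [mem_eraseSigned, mem_erase, mem_univ, and_true]
    exact and_congr_right fun _ => forall_congr' fun _ => by tauto
  rw [Nat.card_congr (Equiv.subtypeEquivRight hcongr),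
    card_signedInjective_eraseSigned_one hF n (by simp) (by simp) (by simp),
    card_erase_of_mem (mem_univ _), card_univ]
  exact prod_congr rfl fun k _ => by omega

theorem card_signedInjective_pow_eq_one {E : Type*} [Field E] [Fintype E]
    (hE : ringChar E ≠ 2) {q : ℕ} (hq : Odd q) (hdvd : q + 1 ∣ Fintype.card E - 1) (n : ℕ) :
    Nat.card {z : Fin n → E // (∀ i, z i ^ (q + 1) = 1) ∧
        SignedInjective z ∧ ∀ i, z i ≠ 0 ∧ z i ≠ 1 ∧ z i ≠ -1} =
      ∏ k ∈ range n, (q - (2 * k + 1)) := by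
  classical
  set T := nthRootsFinset (q + 1) (1 : E)
  have hT (x : E) : x ∈ T ↔ x ^ (q + 1) = 1 := mem_nthRootsFinset q.succ_pos 1
  have hmem (x : E) : x ∈ T.eraseSigned 1 ↔ x ^ (q + 1) = 1 ∧ x ≠ 0 ∧ x ≠ 1 ∧ x ≠ -1 := by
    rw [mem_eraseSigned, hT]
    constructor
    · rintro ⟨h₁, h₂, h₃⟩
      refine ⟨h₃, ?_, h₂, h₁⟩
      rintro rfl
      simp at h₃
    · rintro ⟨h₃, -, h₂, h₁⟩
      exact ⟨h₁, h₂, h₃⟩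
  have hcongr (z : Fin n → E) : ((∀ i, z i ^ (q + 1) = 1) ∧
      SignedInjective z ∧ ∀ i, z i ≠ 0 ∧ z i ≠ 1 ∧ z i ≠ -1) ↔
      SignedInjective z ∧ ∀ i, z i ∈ T.eraseSigned 1 := by
    simp only [hmem, forall_and]
    tauto
  rw [Nat.card_congr (Equiv.subtypeEquivRight hcongr),
    card_signedInjective_eraseSigned_one hE n (fun x => by simp [hT, hq.add_one.neg_pow])
      (by simp [hT]) (by simp [hT]), FiniteField.card_nthRootsFinset_one_of_dvd hdvd]
  exact prod_congr rfl fun k _ => by omega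

theorem prod_sub_add_prod_sub_of_odd {q : ℕ} (hq : Odd q) (m : ℕ) :
    ∏ k ∈ range (m + 1), (q - (2 * k + 3)) + ∏ k ∈ range (m + 1), (q - (2 * k + 1)) =
      2 * ((q - (m + 1) - 1) * ∏ k ∈ range m, (q - (2 * k + 3))) := by
  rw [prod_range_succ, prod_range_succ' (fun k => q - (2 * k + 1))]
  simp only [show ∀ k, 2 * (k + 1) + 1 = 2 * k + 3 by omega, mul_zero, zero_add]
  have hq₂ : q % 2 = 1 := Nat.odd_iff.mp hq
  -- the last factors add up correctly only for `q ≥ 2m + 3`; otherwise, `q` being odd,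
  -- `q ≤ 2m + 1` and the factor `k = m - 1` of the common product vanishes
  obtain h | ⟨hm, hqm⟩ : q - (2 * m + 3) + (q - 1) = 2 * (q - (m + 1) - 1) ∨
      0 < m ∧ q ≤ 2 * m + 1 := by omega
  · rw [← mul_add, h]
    ring
  · rw [prod_eq_zero (i := m - 1) (mem_range.mpr (by omega)) (by omega)]
    ring

theorem MCn_point_count_general {F E : Type*} [Field F] [Fintype F] [Field E] [Fintype E]
    (q : ℕ) (hq : Fintype.card F = q) (hE : Fintype.card E = q ^ 2)
    (hcharF : ringChar F ≠ 2)
    (n : ℕ) (hn : 1 ≤ n) :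
    Nat.card {z : Fin n → F //
        (∀ i j, i ≠ j → z i ≠ z j ∧ z i ≠ -z j) ∧
          ∀ i, z i ≠ 0 ∧ z i ≠ 1 ∧ z i ≠ -1} +
      Nat.card {z : Fin n → E //
        (∀ i, z i ^ (q + 1) = 1) ∧
          (∀ i j, i ≠ j → z i ≠ z j ∧ z i ≠ -z j) ∧
          ∀ i, z i ≠ 0 ∧ z i ≠ 1 ∧ z i ≠ -1} =
      2 * ((q - n - 1) * ∏ i ∈ Finset.range (n - 1), (q - (2 * i + 3))) := by
  have hq_odd : Odd q := Nat.odd_iff.mpr (hq ▸ FiniteField.odd_card_of_char_ne_two hcharF)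
  have hcharE : ringChar E ≠ 2 := mt FiniteField.even_card_iff_char_two.mp
    (by rw [hE, Nat.odd_iff.mp hq_odd.pow]; exact one_ne_zero)
  have hdvd : q + 1 ∣ Fintype.card E - 1 := ⟨q - 1, by rw [hE, ← Nat.sq_sub_sq, one_pow]⟩
  obtain ⟨m, rfl⟩ : ∃ m, n = m + 1 := ⟨n - 1, by omega⟩
  change Nat.card {z // SignedInjective z ∧ _} + Nat.card {z // _ ∧ SignedInjective z ∧ _} = _
  rw [card_signedInjective_ne_zero_one_neg_one hcharF, hq,
    card_signedInjective_pow_eq_one hcharE hq_odd hdvd, Nat.add_sub_cancel]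
  exact prod_sub_add_prod_sub_of_odd hq_odd m

/-- **Point count of `𝓜_{Cₙ}(𝔽_q)`.** Let `F` be a finite field with `q` elements of odd
characteristic, and `E` a finite field with `q²` elements (of the same odd characteristic).
The `𝔽_q`-points of `𝓜_{Cₙ}`, counted as half the sum of the Frobenius-fixed tuples in
`Z̊ₙ(𝔽_q)` and the Frobenius-twisted fixed tuples (those `z ∈ E^n` with `z_i^{q+1} = 1`),
number `(q-n-1)(q-3)(q-5)⋯(q-2n+1)`; concretely, the sum of the two counts equals
`2·(q-n-1)(q-3)(q-5)⋯(q-2n+1)`. -/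
theorem MCn_point_count {F E : Type*} [Field F] [Fintype F] [Field E] [Fintype E]
    (q : ℕ) (hq : Fintype.card F = q) (hE : Fintype.card E = q ^ 2)
    (hcharF : ringChar F ≠ 2) (hcharE : ringChar E = ringChar F)
    (n : ℕ) (hn : 1 ≤ n) :
    Nat.card {z : Fin n → F //
        (∀ i j, i ≠ j → z i ≠ z j ∧ z i ≠ -z j) ∧
          ∀ i, z i ≠ 0 ∧ z i ≠ 1 ∧ z i ≠ -1} +
      Nat.card {z : Fin n → E //
        (∀ i, z i ^ (q + 1) = 1) ∧
          (∀ i j, i ≠ j → z i ≠ z j ∧ z i ≠ -z j) ∧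
          ∀ i, z i ≠ 0 ∧ z i ≠ 1 ∧ z i ≠ -1} =
      2 * ((q - n - 1) * ∏ i ∈ Finset.range (n - 1), (q - (2 * i + 3))) :=
  MCn_point_count_general q hq hE hcharF n hn
end

section
/- The number of connected components of the set {(z₁,…,z_n) ∈ ℝ^n : zᵢ ≠ ±z_j for i≠j, zᵢ ∉ {0,1,-1}} equals 2^n (n+1)!. -/
/-!
A point `z` of the complement has nonzero coordinates, so it has a sign vector `ε ∈ {±1}ⁿ`,
and the `n + 1` positive numbers `1, |z₁|, …, |zₙ|` are pairwise distinct, so they are ordered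
by a unique permutation `σ` of `Fin (n + 1)`. Once `ε` is fixed, `|zᵢ| = εᵢ zᵢ` is linear in `z`,
so the points with invariant `(ε, σ)` form a nonempty open convex set. These sets partition the
complement, hence are its connected components, and there are `2ⁿ (n + 1)!` of them.
-/

open Equiv Function

theorem IsLocallyConstant.natCard_connectedComponents {X ι : Type*} [TopologicalSpace X]
    {F : X → ι} (hF : IsLocallyConstant F) (hsurj : Surjective F)
    (hfib : ∀ i, IsPreconnected (F ⁻¹' {i})) :
    Nat.card (ConnectedComponents X) = Nat.card ι := by
  let G : ConnectedComponents X → ι := Quotient.lift F fun a b (h : connectedComponent a = _) =>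
    hF.apply_eq_of_isPreconnected isPreconnected_connectedComponent mem_connectedComponent
      (h ▸ mem_connectedComponent)
  refine Nat.card_eq_of_bijective G ⟨?_, fun i => ?_⟩
  · rintro ⟨a⟩ ⟨b⟩ (h : F a = F b)
    exact ConnectedComponents.coe_eq_coe'.mpr
      ((hfib (F b)).subset_connectedComponent rfl h)
  · obtain ⟨x, rfl⟩ := hsurj i
    exact ⟨ConnectedComponents.mk x, rfl⟩

namespace CnArrangement

variable {m n : ℕ}

def posChamber (σ : Perm (Fin m)) : Set (Fin m → ℝ) :=
  {v | (∀ k, 0 < v k) ∧ StrictMono (v ∘ σ)}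

theorem isOpen_posChamber (σ : Perm (Fin m)) : IsOpen (posChamber σ) := by
  simp only [posChamber, StrictMono, comp_apply, Set.ofPred_and, Set.ofPred_forall]
  exact (isOpen_iInter_of_finite fun k => isOpen_lt continuous_const (continuous_apply k)).inter
    (isOpen_iInter_of_finite fun i => isOpen_iInter_of_finite fun j =>
      isOpen_iInter_of_finite fun _ => isOpen_lt (continuous_apply _) (continuous_apply _))

theorem convex_posChamber (σ : Perm (Fin m)) : Convex ℝ (posChamber σ) := by
  intro v hv w hw a b ha hb hab
  wlog ha' : 0 < a generalizing v w a b
  · have hb' : 0 < b := by linarith [le_antisymm (not_lt.mp ha') ha]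
    simpa only [add_comm] using this hw hv hb ha (by linarith) hb'
  refine ⟨fun k => ?_, ?_⟩
  · exact add_pos_of_pos_of_nonneg (mul_pos ha' (hv.1 k)) (mul_nonneg hb (hw.1 k).le)
  · exact (hv.2.const_mul ha').add_monotone (hw.2.monotone.const_mul hb)

theorem exists_mem_posChamber_apply_zero (σ : Perm (Fin (m + 1))) :
    ∃ v ∈ posChamber σ, v 0 = 1 := by
  have hc : (0 : ℝ) < (σ.symm 0 : ℕ) + 1 := by positivity
  refine ⟨fun k => ((σ.symm k : ℕ) + 1) / ((σ.symm 0 : ℕ) + 1), ⟨fun k => by positivity,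
    fun i j hij => ?_⟩, div_self hc.ne'⟩
  simp only [comp_apply, symm_apply_apply]
  gcongr
  exact_mod_cast hij

def signedCons (ε : Fin n → ℤˣ) (z : Fin n → ℝ) : Fin (n + 1) → ℝ :=
  Fin.cons 1 fun i => (ε i : ℝ) * z i

theorem continuous_signedCons (ε : Fin n → ℤˣ) : Continuous (signedCons ε) :=
  continuous_const.finCons (continuous_pi fun i => continuous_const.mul (continuous_apply i))

theorem signedCons_add {a b : ℝ} (hab : a + b = 1) (ε : Fin n → ℤˣ) (z w : Fin n → ℝ) :
    signedCons ε (a • z + b • w) = a • signedCons ε z + b • signedCons ε w := by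
  ext k
  cases k using Fin.cases
  · simp [signedCons, hab]
  · simp only [signedCons, Fin.cons_succ, Pi.add_apply, Pi.smul_apply, smul_eq_mul]
    ring

theorem signedCons_mul_tail (ε : Fin n → ℤˣ) {v : Fin (n + 1) → ℝ} (hv : v 0 = 1) :
    signedCons ε (fun i => (ε i : ℝ) * v i.succ) = v := by
  ext k
  cases k using Fin.cases
  · simp [signedCons, hv]
  · simp [signedCons, ← mul_assoc, ← Int.cast_mul, ← Units.val_mul, Int.units_mul_self]

def chamber (ε : Fin n → ℤˣ) (σ : Perm (Fin (n + 1))) : Set (Fin n → ℝ) :=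
  signedCons ε ⁻¹' posChamber σ

theorem isOpen_chamber (ε : Fin n → ℤˣ) (σ : Perm (Fin (n + 1))) : IsOpen (chamber ε σ) :=
  (isOpen_posChamber σ).preimage (continuous_signedCons ε)

theorem convex_chamber (ε : Fin n → ℤˣ) (σ : Perm (Fin (n + 1))) : Convex ℝ (chamber ε σ) := by
  intro z hz w hw a b ha hb hab
  simp only [chamber, Set.mem_preimage, signedCons_add hab]
  exact convex_posChamber σ hz hw ha hb hab

theorem chamber_nonempty (ε : Fin n → ℤˣ) (σ : Perm (Fin (n + 1))) : (chamber ε σ).Nonempty := by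
  obtain ⟨v, hv, hv0⟩ := exists_mem_posChamber_apply_zero σ
  exact ⟨_, (signedCons_mul_tail ε hv0).symm ▸ hv⟩

theorem mul_pos_of_mem_chamber {ε : Fin n → ℤˣ} {σ : Perm (Fin (n + 1))} {z : Fin n → ℝ}
    (hz : z ∈ chamber ε σ) (i : Fin n) : 0 < (ε i : ℝ) * z i := by
  simpa [signedCons] using hz.1 i.succ

def cnComplement (n : ℕ) : Set (Fin n → ℝ) :=
  {z | (∀ i j, i ≠ j → z i ≠ z j ∧ z i ≠ -z j) ∧ ∀ i, z i ≠ 0 ∧ z i ≠ 1 ∧ z i ≠ -1}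

theorem signedCons_eq_cons_abs {ε : Fin n → ℤˣ} {z : Fin n → ℝ}
    (hε : ∀ i, 0 < (ε i : ℝ) * z i) : signedCons ε z = Fin.cons 1 fun i => |z i| := by
  unfold signedCons
  congr 1
  funext i
  rw [← abs_of_pos (hε i), abs_mul, abs_unit_intCast, one_mul]

theorem mem_cnComplement_iff_injective {ε : Fin n → ℤˣ} {z : Fin n → ℝ}
    (hε : ∀ i, 0 < (ε i : ℝ) * z i) : z ∈ cnComplement n ↔ Injective (signedCons ε z) := by
  have hz : ∀ i, z i ≠ 0 := fun i h => by simpa [h] using hε i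
  rw [signedCons_eq_cons_abs hε, Fin.cons_injective_iff]
  simp only [cnComplement, Set.mem_ofPred_eq, Set.mem_range, not_exists, Injective, ne_eq,
    abs_eq_abs, abs_eq zero_le_one]
  grind

theorem chamber_subset_cnComplement (ε : Fin n → ℤˣ) (σ : Perm (Fin (n + 1))) :
    chamber ε σ ⊆ cnComplement n := fun _ hz =>
  (mem_cnComplement_iff_injective (mul_pos_of_mem_chamber hz)).mpr
    ((σ.injective_comp _).mp hz.2.injective)

noncomputable def signs (z : Fin n → ℝ) (i : Fin n) : ℤˣ := if 0 < z i then 1 else -1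

theorem signs_mul_pos {z : Fin n → ℝ} (hz : ∀ i, z i ≠ 0) (i : Fin n) :
    0 < (signs z i : ℝ) * z i := by
  unfold signs
  split_ifs with h
  · simpa using h
  · simpa using lt_of_le_of_ne (not_lt.mp h) (hz i)

theorem eq_signs_of_mul_pos {ε : Fin n → ℤˣ} {z : Fin n → ℝ} (hε : ∀ i, 0 < (ε i : ℝ) * z i) :
    ε = signs z := by
  funext i
  have h := hε i
  rcases Int.units_eq_one_or (ε i) with h1 | h1 <;> rw [h1] at h ⊢ <;> norm_num at h
  · simp [signs, h]
  · simp [signs, h.not_gt]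

noncomputable def chamberIndex (z : Fin n → ℝ) : (Fin n → ℤˣ) × Perm (Fin (n + 1)) :=
  (signs z, Tuple.sort (signedCons (signs z) z))

theorem chamberIndex_eq_iff {z : Fin n → ℝ} (hz : z ∈ cnComplement n) {ε : Fin n → ℤˣ}
    {σ : Perm (Fin (n + 1))} : chamberIndex z = (ε, σ) ↔ z ∈ chamber ε σ := by
  constructor
  · rintro ⟨⟩
    have hpos := signs_mul_pos fun i => (hz.2 i).1
    have hinj := (mem_cnComplement_iff_injective hpos).mp hz
    refine ⟨fun k => ?_,
      (Tuple.monotone_sort _).strictMono_of_injective (hinj.comp (Equiv.injective _))⟩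
    cases k using Fin.cases
    · exact one_pos
    · exact hpos _
  · intro hch
    obtain rfl := eq_signs_of_mul_pos (mul_pos_of_mem_chamber hch)
    refine Prod.ext rfl (Tuple.eq_sort_iff.mpr ⟨hch.2.monotone, fun i j hij heq => ?_⟩).symm
    exact absurd heq (hch.2 hij).ne

theorem chamberIndex_fiber (t : (Fin n → ℤˣ) × Perm (Fin (n + 1))) :
    (fun z : cnComplement n => chamberIndex z.1) ⁻¹' {t} = Subtype.val ⁻¹' chamber t.1 t.2 :=
  Set.ext fun z => chamberIndex_eq_iff z.2

theorem isLocallyConstant_chamberIndex :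
    IsLocallyConstant fun z : cnComplement n => chamberIndex z.1 :=
  IsLocallyConstant.iff_isOpen_fiber.mpr fun t => by
    rw [chamberIndex_fiber]
    exact (isOpen_chamber t.1 t.2).preimage continuous_subtype_val

theorem isPreconnected_chamberIndex_fiber (t : (Fin n → ℤˣ) × Perm (Fin (n + 1))) :
    IsPreconnected ((fun z : cnComplement n => chamberIndex z.1) ⁻¹' {t}) := by
  rw [chamberIndex_fiber, ← Topology.IsInducing.subtypeVal.isPreconnected_image,
    Subtype.image_preimage_coe, Set.inter_eq_right.mpr (chamber_subset_cnComplement t.1 t.2)]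
  exact (convex_chamber t.1 t.2).isPreconnected

theorem surjective_chamberIndex :
    Surjective fun z : cnComplement n => chamberIndex z.1 := by
  rintro ⟨ε, σ⟩
  obtain ⟨z, hz⟩ := chamber_nonempty ε σ
  have hS := chamber_subset_cnComplement ε σ hz
  exact ⟨⟨z, hS⟩, (chamberIndex_eq_iff hS).mpr hz⟩

end CnArrangement

/-- **Real components of the arrangement `Z̊ₙ`.** The set of `(z₁,…,z_n) ∈ ℝ^n` with
`z_i ≠ ± z_j` for `i ≠ j` and `z_i ∉ {0, 1, -1}` has exactly `2^n · (n+1)!` connected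
components. -/
theorem Cn_arrangement_real_components (n : ℕ) :
    Nat.card (ConnectedComponents
      {z : Fin n → ℝ |
        (∀ i j, i ≠ j → z i ≠ z j ∧ z i ≠ -z j) ∧
          ∀ i, z i ≠ 0 ∧ z i ≠ 1 ∧ z i ≠ -1}) =
      2 ^ n * Nat.factorial (n + 1) := by
  change Nat.card (ConnectedComponents (CnArrangement.cnComplement n)) = _
  rw [CnArrangement.isLocallyConstant_chamberIndex.natCard_connectedComponents
    CnArrangement.surjective_chamberIndex CnArrangement.isPreconnected_chamberIndex_fiber]
  simp [Nat.card_eq_fintype_card, Fintype.card_perm, Fintype.card_units_int]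
end

section
/- In the polynomial ring ℂ[u₁,…,u₅], let I be the ideal generated by R_i = u_i + u_{i+2}u_{i+3} − 1 for i = 1,…,5 (indices mod 5). Then the quotient ℂ[u₁,…,u₅]/I is an integral domain of Krull dimension 2. -/
/-!
Using the relations `R₃` and `R₄` to eliminate `u₃ = 1 - u₀u₁` and `u₄ = 1 - u₁u₂` (indices
from `0`), the remaining three relations all become multiples of the single cubic
`f = (1 - u₁u₂)u₀ + (u₂ - 1)`, so the ring is `ℂ[u₀, u₁, u₂]/(f)`. As a polynomial in `u₀`,
`f` is linear with relatively prime coefficients, hence irreducible, hence prime. Cutting the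
three-dimensional polynomial ring by a nonzero element leaves dimension at most `2`, and the
surjection `(u₀, u₁, u₂) ↦ (1, t, 0)` onto `ℂ[t]`, which kills the nonzero element `u₂` of
the domain, gives dimension at least `2`.
-/

open MvPolynomial

/-- The ideal of `ℂ[u₁,…,u₅]` generated by the pentagon relations
`R_i = u_i + u_{i+2} u_{i+3} − 1` (indices mod 5). -/
noncomputable def pentagonIdeal : Ideal (MvPolynomial (Fin 5) ℂ) :=
  Ideal.span (Set.range fun i : Fin 5 =>
    (X i : MvPolynomial (Fin 5) ℂ) + X (i + 2) * X (i + 3) - 1)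

noncomputable def Ideal.quotientAlgEquivOfInverseModulo {R A B : Type*} [CommSemiring R]
    [CommRing A] [CommRing B] [Algebra R A] [Algebra R B] {I : Ideal A} {J : Ideal B}
    (f : A →ₐ[R] B) (g : B →ₐ[R] A) (hf : I ≤ J.comap f) (hg : J ≤ I.comap g)
    (hgf : (Ideal.Quotient.mkₐ R I).comp (g.comp f) = Ideal.Quotient.mkₐ R I)
    (hfg : (Ideal.Quotient.mkₐ R J).comp (f.comp g) = Ideal.Quotient.mkₐ R J) :
    (A ⧸ I) ≃ₐ[R] (B ⧸ J) :=
  AlgEquiv.ofAlgHom (Ideal.quotientMapₐ J f hf) (Ideal.quotientMapₐ I g hg)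
    (Ideal.Quotient.algHom_ext R <| by
      rw [AlgHom.comp_assoc, Ideal.quotient_map_comp_mkₐ, ← AlgHom.comp_assoc,
        Ideal.quotient_map_comp_mkₐ, AlgHom.comp_assoc, hfg, AlgHom.id_comp])
    (Ideal.Quotient.algHom_ext R <| by
      rw [AlgHom.comp_assoc, Ideal.quotient_map_comp_mkₐ, ← AlgHom.comp_assoc,
        Ideal.quotient_map_comp_mkₐ, AlgHom.comp_assoc, hgf, AlgHom.id_comp])

theorem MvPolynomial.irreducible_X_sub_C {σ R : Type*} [CommRing R] [IsDomain R] (i : σ)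
    (c : R) : Irreducible (X i - C c : MvPolynomial σ R) := by
  simpa [← sub_eq_add_neg] using
    irreducible_mul_X_add 1 (-C c) i one_ne_zero (by simp) (by simp) isRelPrime_one_left

theorem MvPolynomial.ringKrullDim_quotient_span_singleton_lt {K σ : Type*} [Field K] [Finite σ]
    {f : MvPolynomial σ K} (hf : f ≠ 0) :
    ringKrullDim (MvPolynomial σ K ⧸ Ideal.span {f}) < Nat.card σ := by
  have h := ringKrullDim_quotient_succ_le_of_nonZeroDivisor (mem_nonZeroDivisors_of_ne_zero hf)
  rw [ringKrullDim_of_isNoetherianRing, ringKrullDim_eq_zero_of_field,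
    zero_add] at h
  exact ENat.WithBot.add_one_le_natCast_iff.mp h

section Cubic

variable (K : Type*) [Field K]

noncomputable def cubicRelation : MvPolynomial (Fin 3) K :=
  (1 - X 1 * X 2) * X 0 + (X 2 - 1)

theorem isRelPrime_one_sub_X_one_mul_X_two_X_two_sub_one :
    IsRelPrime (1 - X 1 * X 2 : MvPolynomial (Fin 3) K) (X 2 - 1) := by
  have hirr : Irreducible (X 2 - 1 : MvPolynomial (Fin 3) K) := by
    simpa using irreducible_X_sub_C (R := K) (2 : Fin 3) 1
  refine (hirr.isRelPrime_iff_not_dvd.mpr fun hdvd => ?_).symm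
  simpa using map_dvd (eval ![0, 0, 1]) hdvd

theorem prime_cubicRelation : Prime (cubicRelation K) := by
  have hlead_ne : (1 - X 1 * X 2 : MvPolynomial (Fin 3) K) ≠ 0 := fun h => by
    simpa using congrArg (eval 0) h
  have hlead : (0 : Fin 3) ∉ (1 - X 1 * X 2 : MvPolynomial (Fin 3) K).vars := fun h => by
    rcases Finset.mem_union.mp (vars_sub_subset _ h) with h | h
    · simp at h
    · simpa using vars_mul _ _ h
  have hconst : (0 : Fin 3) ∉ (X 2 - 1 : MvPolynomial (Fin 3) K).vars := by
    rw [vars_sub_of_disjoint] <;> simp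
  exact UniqueFactorizationMonoid.irreducible_iff_prime.mp <| irreducible_mul_X_add _ _ 0
    hlead_ne hlead hconst (isRelPrime_one_sub_X_one_mul_X_two_X_two_sub_one K)

instance : (Ideal.span {cubicRelation K}).IsPrime :=
  (Ideal.span_singleton_prime (prime_cubicRelation K).ne_zero).mpr (prime_cubicRelation K)

theorem two_le_ringKrullDim_quotient_cubicRelation :
    2 ≤ ringKrullDim (MvPolynomial (Fin 3) K ⧸ Ideal.span {cubicRelation K}) := by
  let φ : MvPolynomial (Fin 3) K →ₐ[K] Polynomial K := aeval ![1, Polynomial.X, 0]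
  have hφ : φ (cubicRelation K) = 0 := by simp [φ, cubicRelation]
  have hX₂ : Ideal.Quotient.mk (Ideal.span {cubicRelation K}) (X 2) ≠ 0 := by
    rw [Ne, Ideal.Quotient.eq_zero_iff_mem, Ideal.mem_span_singleton]
    intro hdvd
    simpa [cubicRelation] using map_dvd (eval ![1, 1, 1]) hdvd
  have h := ringKrullDim_succ_le_of_surjective
    (Ideal.Quotient.lift _ φ.toRingHom fun _ ha => by
      obtain ⟨c, rfl⟩ := Ideal.mem_span_singleton'.mp ha
      simp [hφ])
    (Ideal.Quotient.lift_surjective_of_surjective _ _ fun p =>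
      ⟨Polynomial.aeval (X 1) p, by simp [φ, ← Polynomial.aeval_algHom_apply]⟩)
    (mem_nonZeroDivisors_of_ne_zero hX₂) (by simp [φ])
  rwa [Polynomial.ringKrullDim_of_isNoetherianRing, ringKrullDim_eq_zero_of_field, zero_add,
    one_add_one_eq_two] at h

theorem ringKrullDim_quotient_cubicRelation :
    ringKrullDim (MvPolynomial (Fin 3) K ⧸ Ideal.span {cubicRelation K}) = 2 := by
  refine le_antisymm ?_ (two_le_ringKrullDim_quotient_cubicRelation K)
  have h := ringKrullDim_quotient_span_singleton_lt (prime_cubicRelation K).ne_zero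
  rw [Nat.card_fin] at h
  exact ENat.WithBot.lt_add_one_iff.mp h

end Cubic

theorem pentagon_mem_pentagonIdeal (i : Fin 5) :
    (X i + X (i + 2) * X (i + 3) - 1 : MvPolynomial (Fin 5) ℂ) ∈ pentagonIdeal :=
  Ideal.subset_span ⟨i, rfl⟩

noncomputable def pentagonToCubic : MvPolynomial (Fin 5) ℂ →ₐ[ℂ] MvPolynomial (Fin 3) ℂ :=
  aeval ![X 0, X 1, X 2, 1 - X 0 * X 1, 1 - X 1 * X 2]

noncomputable def cubicToPentagon : MvPolynomial (Fin 3) ℂ →ₐ[ℂ] MvPolynomial (Fin 5) ℂ :=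
  aeval ![X 0, X 1, X 2]

theorem pentagonIdeal_le_comap_pentagonToCubic :
    pentagonIdeal ≤ (Ideal.span {cubicRelation ℂ}).comap pentagonToCubic := by
  rw [pentagonIdeal, Ideal.span_le]
  rintro _ ⟨i, rfl⟩
  refine Ideal.mem_span_singleton'.mpr ⟨![1, -X 1, 1, 0, 0] i, ?_⟩
  fin_cases i <;> simp [pentagonToCubic, cubicRelation] <;> ring

theorem span_cubicRelation_le_comap_cubicToPentagon :
    Ideal.span {cubicRelation ℂ} ≤ pentagonIdeal.comap cubicToPentagon := by
  rw [Ideal.span_le, Set.singleton_subset_iff]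
  have h : cubicToPentagon (cubicRelation ℂ) =
      (X 0 + X 2 * X 3 - 1) - X 2 * (X 3 + X 0 * X 1 - 1) := by
    simp [cubicToPentagon, cubicRelation]
    ring
  rw [SetLike.mem_coe, Ideal.mem_comap, h]
  exact sub_mem (pentagon_mem_pentagonIdeal 0)
    (Ideal.mul_mem_left _ _ (pentagon_mem_pentagonIdeal 3))

theorem pentagonToCubic_comp_cubicToPentagon :
    pentagonToCubic.comp cubicToPentagon = AlgHom.id ℂ _ := by
  ext i
  fin_cases i <;> simp [pentagonToCubic, cubicToPentagon]

theorem cubicToPentagon_pentagonToCubic_X_sub_mem (i : Fin 5) :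
    cubicToPentagon (pentagonToCubic (X i)) - X i ∈ pentagonIdeal := by
  have h : cubicToPentagon (pentagonToCubic (X i)) - X i =
      ![0, 0, 0, -1, -1] i * (X i + X (i + 2) * X (i + 3) - 1) := by
    fin_cases i <;> simp [pentagonToCubic, cubicToPentagon] <;> ring
  rw [h]
  exact Ideal.mul_mem_left _ _ (pentagon_mem_pentagonIdeal i)

noncomputable def pentagonQuotientEquiv :
    (MvPolynomial (Fin 5) ℂ ⧸ pentagonIdeal) ≃ₐ[ℂ]
      (MvPolynomial (Fin 3) ℂ ⧸ Ideal.span {cubicRelation ℂ}) :=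
  Ideal.quotientAlgEquivOfInverseModulo pentagonToCubic cubicToPentagon
    pentagonIdeal_le_comap_pentagonToCubic span_cubicRelation_le_comap_cubicToPentagon
    (MvPolynomial.algHom_ext fun i => Ideal.Quotient.eq.mpr
      (cubicToPentagon_pentagonToCubic_X_sub_mem i))
    (by rw [pentagonToCubic_comp_cubicToPentagon, AlgHom.comp_id])

/-- **The partial compactification `𝓜̃_{A₂}`.** The quotient `ℂ[u₁,…,u₅]/I`, where `I` is
generated by the five pentagon relations `u_i + u_{i+2}u_{i+3} − 1`, is an integral domain
of Krull dimension `2`. -/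
theorem pentagon_ring_domain_dim_two :
    IsDomain (MvPolynomial (Fin 5) ℂ ⧸ pentagonIdeal) ∧
      ringKrullDim (MvPolynomial (Fin 5) ℂ ⧸ pentagonIdeal) = 2 := by
  let e := pentagonQuotientEquiv.toRingEquiv
  exact ⟨e.toMulEquiv.isDomain, by rw [ringKrullDim_eq_of_ringEquiv e,
    ringKrullDim_quotient_cubicRelation]⟩
end

section
/- For the type B₂/C₂ system of six u-equations in six real variables u_{[11̄]}, u_{[22̄]}, u_{[33̄]}, u_{[13]}, u_{[12̄]}, u_{[23̄]}, consisting of 1 = u_{[11̄]} + u_{[22̄]}u_{[33̄]}u_{[23̄]}² and 1 = u_{[23̄]} + u_{[11̄]}u_{[13]}u_{[12̄]} together with their images under the cyclic rotation permuting the variables as [11̄]→[22̄]→[33̄]→[11̄] and [23̄]→[13]→[12̄]→[23̄] (six equations in total), any solution with all six variables positive has all six variables in the open interval (0,1), and the solution set with all variables positive is homeomorphic to ℝ². -/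
/-- The positive solution set of the six type `B₂/C₂` u-equations in the six variables
`(A, B, C, P, Q, R) = (u_{[11̄]}, u_{[22̄]}, u_{[33̄]}, u_{[23̄]}, u_{[13]}, u_{[12̄]})`:
the two equations `A + B·C·P² = 1`, `P + A·Q·R = 1` together with their cyclic rotations
under `A → B → C → A`, `P → Q → R → P`. -/
def C2PositivePart : Set (ℝ × ℝ × ℝ × ℝ × ℝ × ℝ) :=
  {x | match x with
    | (A, B, C, P, Q, R) =>
      A + B * C * P ^ 2 = 1 ∧
      B + C * A * Q ^ 2 = 1 ∧
      C + A * B * R ^ 2 = 1 ∧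
      P + A * Q * R = 1 ∧
      Q + B * R * P = 1 ∧
      R + C * P * Q = 1 ∧
      0 < A ∧ 0 < B ∧ 0 < C ∧ 0 < P ∧ 0 < Q ∧ 0 < R}

lemma C2_mem_iff (A B C P Q R : ℝ) :
    (A, B, C, P, Q, R) ∈ C2PositivePart ↔
      (A + B * C * P ^ 2 = 1 ∧
      B + C * A * Q ^ 2 = 1 ∧
      C + A * B * R ^ 2 = 1 ∧
      P + A * Q * R = 1 ∧
      Q + B * R * P = 1 ∧
      R + C * P * Q = 1 ∧
      0 < A ∧ 0 < B ∧ 0 < C ∧ 0 < P ∧ 0 < Q ∧ 0 < R) := Iff.rfl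

/-- The open triangle. -/
def C2Triangle : Set (ℝ × ℝ) := {p | 0 < p.1 ∧ 0 < p.2 ∧ p.1 + p.2 < 1}

/-- The open quadrant. -/
def C2Quadrant : Set (ℝ × ℝ) := Set.Ioi (0:ℝ) ×ˢ Set.Ioi (0:ℝ)

lemma C2_sum (A B C P Q R : ℝ) (h : (A, B, C, P, Q, R) ∈ C2PositivePart) :
    P + Q + R = 2 := by
  obtain ⟨h1, h2, h3, h4, h5, h6, hA, hB, hC, hP, hQ, hR⟩ := h
  linear_combination (-(Q*R))*h1 + h4 + C*P*Q*h5 + (1-Q)*h6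

noncomputable section

/-- Forward map: the solution set to the triangle. -/
def c2ToTri (x : C2PositivePart) : C2Triangle :=
  ⟨(1 - x.1.2.2.2.1, 1 - x.1.2.2.2.2.1), by
    obtain ⟨⟨A, B, C, P, Q, R⟩, hx⟩ := x
    have hs := C2_sum A B C P Q R hx
    obtain ⟨h1, h2, h3, h4, h5, h6, hA, hB, hC, hP, hQ, hR⟩ := hx
    refine ⟨?_, ?_, ?_⟩ <;>
    · simp only
      nlinarith [mul_pos (mul_pos hA hQ) hR, mul_pos (mul_pos hB hR) hP,
        mul_pos (mul_pos hC hP) hQ]⟩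

/-- Backward map: the triangle to the solution set. -/
def triToC2 (t : C2Triangle) : C2PositivePart :=
  ⟨(t.1.1 / ((1 - t.1.2) * (t.1.1 + t.1.2)),
    t.1.2 / ((t.1.1 + t.1.2) * (1 - t.1.1)),
    (1 - t.1.1 - t.1.2) / ((1 - t.1.1) * (1 - t.1.2)),
    1 - t.1.1, 1 - t.1.2, t.1.1 + t.1.2), by
    obtain ⟨⟨p, q⟩, hp, hq, hpq⟩ := t
    simp only at hp hq hpq
    have h1p : (0:ℝ) < 1 - p := by linarith
    have h1q : (0:ℝ) < 1 - q := by linarith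
    have hr : (0:ℝ) < 1 - p - q := by linarith
    have hs : (0:ℝ) < p + q := by linarith
    rw [C2_mem_iff]
    refine ⟨?_, ?_, ?_, ?_, ?_, ?_,
      div_pos hp (mul_pos h1q hs), div_pos hq (mul_pos hs h1p),
      div_pos hr (mul_pos h1p h1q),
      by linarith, by linarith, by linarith⟩ <;>
    · field_simp
      ring⟩

lemma left_inv_c2 : Function.LeftInverse triToC2 c2ToTri := by
  rintro ⟨⟨A, B, C, P, Q, R⟩, hx⟩
  have hs := C2_sum A B C P Q R hx
  obtain ⟨h1, h2, h3, h4, h5, h6, hA, hB, hC, hP, hQ, hR⟩ := hx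
  have hP1 : P < 1 := by nlinarith [mul_pos (mul_pos hA hQ) hR]
  have hQ1 : Q < 1 := by nlinarith [mul_pos (mul_pos hB hR) hP]
  apply Subtype.ext
  simp only [triToC2, c2ToTri]
  refine Prod.ext ?_ (Prod.ext ?_ (Prod.ext ?_ (Prod.ext (by ring)
    (Prod.ext (by ring) (by simp only; linarith)))))
  · simp only
    rw [div_eq_iff (by nlinarith)]
    linear_combination -h4 + A*Q*hs
  · simp only
    rw [div_eq_iff (by nlinarith)]
    linear_combination -h5 + B*P*hs
  · simp only
    rw [div_eq_iff (by nlinarith)]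
    linear_combination -h6 + hs

lemma right_inv_c2 : Function.RightInverse triToC2 c2ToTri := by
  rintro ⟨⟨p, q⟩, hp, hq, hpq⟩
  apply Subtype.ext
  simp only [triToC2, c2ToTri]
  exact Prod.ext (by ring) (by ring)

lemma cont_c2ToTri : Continuous c2ToTri := by
  apply Continuous.subtype_mk
  exact ((continuous_const.sub
      continuous_subtype_val.snd.snd.snd.fst).prodMk
    (continuous_const.sub continuous_subtype_val.snd.snd.snd.snd.fst))

lemma cont_triToC2 : Continuous triToC2 := by
  have hc1 : Continuous fun t : C2Triangle => (t : ℝ × ℝ).1 :=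
    continuous_subtype_val.fst
  have hc2 : Continuous fun t : C2Triangle => (t : ℝ × ℝ).2 :=
    continuous_subtype_val.snd
  have key : ∀ t : C2Triangle, 0 < (t : ℝ × ℝ).1 ∧ 0 < (t : ℝ × ℝ).2 ∧
      (t : ℝ × ℝ).1 + (t : ℝ × ℝ).2 < 1 := fun t => t.2
  apply Continuous.subtype_mk
  have d1 : Continuous fun t : C2Triangle =>
      (t : ℝ × ℝ).1 / ((1 - (t : ℝ × ℝ).2) * ((t : ℝ × ℝ).1 + (t : ℝ × ℝ).2)) := by
    refine hc1.div (((continuous_const.sub hc2)).mul (hc1.add hc2)) fun t => ?_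
    obtain ⟨h1, h2, h3⟩ := key t
    have : (0:ℝ) < 1 - (t : ℝ × ℝ).2 := by linarith
    have : (0:ℝ) < (t : ℝ × ℝ).1 + (t : ℝ × ℝ).2 := by linarith
    positivity
  have d2 : Continuous fun t : C2Triangle =>
      (t : ℝ × ℝ).2 / (((t : ℝ × ℝ).1 + (t : ℝ × ℝ).2) * (1 - (t : ℝ × ℝ).1)) := by
    refine hc2.div ((hc1.add hc2).mul ((continuous_const.sub hc1))) fun t => ?_
    obtain ⟨h1, h2, h3⟩ := key t
    have : (0:ℝ) < 1 - (t : ℝ × ℝ).1 := by linarith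
    have : (0:ℝ) < (t : ℝ × ℝ).1 + (t : ℝ × ℝ).2 := by linarith
    positivity
  have d3 : Continuous fun t : C2Triangle =>
      (1 - (t : ℝ × ℝ).1 - (t : ℝ × ℝ).2) / ((1 - (t : ℝ × ℝ).1) * (1 - (t : ℝ × ℝ).2)) := by
    refine ((continuous_const.sub hc1).sub hc2).div
      ((continuous_const.sub hc1).mul ((continuous_const.sub hc2))) fun t => ?_
    obtain ⟨h1, h2, h3⟩ := key t
    have : (0:ℝ) < 1 - (t : ℝ × ℝ).1 := by linarith
    have : (0:ℝ) < 1 - (t : ℝ × ℝ).2 := by linarith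
    positivity
  exact d1.prodMk (d2.prodMk (d3.prodMk ((continuous_const.sub hc1).prodMk
    ((continuous_const.sub hc2).prodMk (hc1.add hc2)))))

/-- The solution set is homeomorphic to the open triangle. -/
def c2HomeoTri : C2PositivePart ≃ₜ C2Triangle where
  toFun := c2ToTri
  invFun := triToC2
  left_inv := left_inv_c2
  right_inv := right_inv_c2
  continuous_toFun := cont_c2ToTri
  continuous_invFun := cont_triToC2

/-- The open triangle is homeomorphic to the open quadrant:
`(p,q) ↦ (p/(1-p-q), q/(1-p-q))`. -/
def triHomeoQuad : C2Triangle ≃ₜ C2Quadrant where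
  toFun t := ⟨((t : ℝ × ℝ).1 / (1 - (t : ℝ × ℝ).1 - (t : ℝ × ℝ).2),
      (t : ℝ × ℝ).2 / (1 - (t : ℝ × ℝ).1 - (t : ℝ × ℝ).2)), by
    obtain ⟨h1, h2, h3⟩ := t.2
    have hr : (0:ℝ) < 1 - (t : ℝ × ℝ).1 - (t : ℝ × ℝ).2 := by linarith
    exact ⟨Set.mem_Ioi.2 (div_pos h1 hr), Set.mem_Ioi.2 (div_pos h2 hr)⟩⟩
  invFun s := ⟨((s : ℝ × ℝ).1 / (1 + (s : ℝ × ℝ).1 + (s : ℝ × ℝ).2),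
      (s : ℝ × ℝ).2 / (1 + (s : ℝ × ℝ).1 + (s : ℝ × ℝ).2)), by
    obtain ⟨h1, h2⟩ := s.2
    rw [Set.mem_Ioi] at h1 h2
    have hs : (0:ℝ) < 1 + (s : ℝ × ℝ).1 + (s : ℝ × ℝ).2 := by linarith
    refine ⟨div_pos h1 hs, div_pos h2 hs, ?_⟩
    rw [← add_div, div_lt_one hs]
    linarith⟩
  left_inv := by
    rintro ⟨⟨p, q⟩, h1, h2, h3⟩
    simp only at h1 h2 h3
    have hr : (0:ℝ) < 1 - p - q := by linarith
    have hr' : (1:ℝ) - p - q ≠ 0 := ne_of_gt hr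
    apply Subtype.ext
    simp only
    have hd : 1 + p / (1 - p - q) + q / (1 - p - q) = 1 / (1 - p - q) := by
      field_simp
      ring
    rw [hd]
    refine Prod.ext ?_ ?_ <;> · simp only; field_simp
  right_inv := by
    rintro ⟨⟨a, b⟩, h1, h2⟩
    rw [Set.mem_Ioi] at h1 h2
    simp only at h1 h2
    have hs : (0:ℝ) < 1 + a + b := by linarith
    have hs' : (1:ℝ) + a + b ≠ 0 := ne_of_gt hs
    apply Subtype.ext
    simp only
    have hd : 1 - a / (1 + a + b) - b / (1 + a + b) = 1 / (1 + a + b) := by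
      field_simp
      ring
    rw [hd]
    refine Prod.ext ?_ ?_ <;> · simp only; field_simp
  continuous_toFun := by
    apply Continuous.subtype_mk
    have hc1 : Continuous fun t : C2Triangle => (t : ℝ × ℝ).1 :=
      continuous_subtype_val.fst
    have hc2 : Continuous fun t : C2Triangle => (t : ℝ × ℝ).2 :=
      continuous_subtype_val.snd
    have hd : Continuous fun t : C2Triangle => 1 - (t : ℝ × ℝ).1 - (t : ℝ × ℝ).2 :=
      (continuous_const.sub hc1).sub hc2
    have hne : ∀ t : C2Triangle, 1 - (t : ℝ × ℝ).1 - (t : ℝ × ℝ).2 ≠ 0 := by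
      intro t; obtain ⟨h1, h2, h3⟩ := t.2
      have : (0:ℝ) < 1 - (t : ℝ × ℝ).1 - (t : ℝ × ℝ).2 := by linarith
      exact ne_of_gt this
    exact (hc1.div hd hne).prodMk (hc2.div hd hne)
  continuous_invFun := by
    apply Continuous.subtype_mk
    have hc1 : Continuous fun s : C2Quadrant => (s : ℝ × ℝ).1 :=
      continuous_subtype_val.fst
    have hc2 : Continuous fun s : C2Quadrant => (s : ℝ × ℝ).2 :=
      continuous_subtype_val.snd
    have hd : Continuous fun s : C2Quadrant => 1 + (s : ℝ × ℝ).1 + (s : ℝ × ℝ).2 :=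
      (continuous_const.add hc1).add hc2
    have hne : ∀ s : C2Quadrant, 1 + (s : ℝ × ℝ).1 + (s : ℝ × ℝ).2 ≠ 0 := by
      intro s; obtain ⟨h1, h2⟩ := s.2
      rw [Set.mem_Ioi] at h1 h2
      have : (0:ℝ) < 1 + (s : ℝ × ℝ).1 + (s : ℝ × ℝ).2 := by linarith
      exact ne_of_gt this
    exact (hc1.div hd hne).prodMk (hc2.div hd hne)

/-- The quadrant is homeomorphic to `ℝ × ℝ`. -/
def quadHomeoPlane : C2Quadrant ≃ₜ (ℝ × ℝ) :=
  (Homeomorph.Set.prod (Set.Ioi (0:ℝ)) (Set.Ioi (0:ℝ))).trans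
    (Real.expOrderIso.toHomeomorph.symm.prodCongr Real.expOrderIso.toHomeomorph.symm)

end

/-- **The positive part of `𝓜_{C₂}`.** Any solution of the six type `B₂/C₂` u-equations
with all six variables positive has all six variables in the open interval `(0,1)`, and
the positive solution set is homeomorphic to `ℝ²`. -/
theorem C2_positive_part :
    (∀ x ∈ C2PositivePart,
      x.1 < 1 ∧ x.2.1 < 1 ∧ x.2.2.1 < 1 ∧ x.2.2.2.1 < 1 ∧ x.2.2.2.2.1 < 1 ∧
        x.2.2.2.2.2 < 1) ∧
    Nonempty (C2PositivePart ≃ₜ (ℝ × ℝ)) := by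
  constructor
  · rintro ⟨A, B, C, P, Q, R⟩ hx
    obtain ⟨h1, h2, h3, h4, h5, h6, hA, hB, hC, hP, hQ, hR⟩ := hx
    refine ⟨?_, ?_, ?_, ?_, ?_, ?_⟩ <;>
      nlinarith [mul_pos (mul_pos hB hC) (pow_pos hP 2),
        mul_pos (mul_pos hC hA) (pow_pos hQ 2),
        mul_pos (mul_pos hA hB) (pow_pos hR 2),
        mul_pos (mul_pos hA hQ) hR, mul_pos (mul_pos hB hR) hP,
        mul_pos (mul_pos hC hP) hQ]
  · exact ⟨c2HomeoTri.trans (triHomeoQuad.trans quadHomeoPlane)⟩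
end
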